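/- arXiv:0804.0154 — 8 statements merged into one kernel-verified Lean document; each statement's English description precedes it below -/
import Mathlib

section
/- Let I be a set and let p be a real number with 1 ≤ p < ∞. The map h_p : B_1(I) → B_p(I) sending x = (x_i)_{i∈I} to (sgn(x_i)·|x_i|^{1/p})_{i∈I} is a homeomorphism, where both B_1(I) and B_p(I) carry the subspace topology induced by the product topology on ℝ^I. -/
open Set

/-- `B_p(I) = {x ∈ ℝ^I : (|x_i|^p) summable and ∑ |x_i|^p ≤ 1}`. -/
noncomputable def BpBall (I : Type*) (p : ℝ) : Set (I → ℝ) :=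
  {x | Summable (fun i => |x i| ^ p) ∧ ∑' i, |x i| ^ p ≤ 1}

/-! For `c > 0`, `t ↦ sgn t · |t|^c` is a homeomorphism of `ℝ` with inverse exponent `1/c`, and
`|sgn t · |t|^{p/q}|^q = |t|^p`. So the coordinatewise map with exponent `p/q` is a
homeomorphism of `ℝ^I` under which `B_p(I)` is exactly the preimage of `B_q(I)`, and it
restricts to a homeomorphism `B_p(I) ≃ₜ B_q(I)`. -/

noncomputable def signPow (c t : ℝ) : ℝ := Real.sign t * |t| ^ c

section signPow

variable {c d : ℝ}

lemma signPow_eq_sub_of_pos (hc : 0 < c) (t : ℝ) :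
    signPow c t = max t 0 ^ c - max (-t) 0 ^ c := by
  rcases lt_trichotomy t 0 with h | rfl | h
  · simp [signPow, Real.sign_of_neg h, abs_of_neg h, max_eq_right h.le,
      max_eq_left (neg_nonneg.2 h.le), Real.zero_rpow hc.ne']
  · simp [signPow, Real.zero_rpow hc.ne']
  · simp [signPow, Real.sign_of_pos h, abs_of_pos h, max_eq_left h.le,
      max_eq_right (neg_nonpos.2 h.le), Real.zero_rpow hc.ne']

lemma continuous_signPow (hc : 0 < c) : Continuous (signPow c) := by
  have hpos : Continuous fun t : ℝ => max t 0 ^ c :=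
    continuous_iff_continuousAt.2 fun t =>
      ContinuousAt.rpow_const (by fun_prop) (Or.inr hc.le)
  rw [funext (signPow_eq_sub_of_pos hc)]
  exact hpos.sub (hpos.comp continuous_neg)

lemma abs_signPow (hc : c ≠ 0) (t : ℝ) : |signPow c t| = |t| ^ c := by
  rcases lt_trichotomy t 0 with h | rfl | h
  · simp [signPow, Real.sign_of_neg h, abs_of_nonneg (Real.rpow_nonneg (abs_nonneg t) c)]
  · simp [signPow, Real.zero_rpow hc]
  · simp [signPow, Real.sign_of_pos h, abs_of_nonneg (Real.rpow_nonneg (abs_nonneg t) c)]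

lemma sign_signPow (t : ℝ) : Real.sign (signPow c t) = Real.sign t := by
  rcases lt_trichotomy t 0 with h | rfl | h
  · have : 0 < |t| ^ c := Real.rpow_pos_of_pos (abs_pos.2 h.ne) c
    rw [signPow, Real.sign_of_neg h, Real.sign_of_neg (by linarith)]
  · simp [signPow]
  · have : 0 < |t| ^ c := Real.rpow_pos_of_pos (abs_pos.2 h.ne') c
    rw [signPow, Real.sign_of_pos h, Real.sign_of_pos (by linarith)]

lemma signPow_one (t : ℝ) : signPow 1 t = t := by
  rcases lt_trichotomy t 0 with h | rfl | h
  · simp [signPow, Real.sign_of_neg h, abs_of_neg h]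
  · simp [signPow]
  · simp [signPow, Real.sign_of_pos h, abs_of_pos h]

lemma signPow_signPow (hc : c ≠ 0) (t : ℝ) :
    signPow d (signPow c t) = signPow (c * d) t := by
  rw [signPow, sign_signPow, abs_signPow hc, ← Real.rpow_mul (abs_nonneg t), signPow]

noncomputable def signPowHomeomorph (hc : 0 < c) : ℝ ≃ₜ ℝ where
  toFun := signPow c
  invFun := signPow c⁻¹
  left_inv t := by rw [signPow_signPow hc.ne', mul_inv_cancel₀ hc.ne', signPow_one]
  right_inv t := by rw [signPow_signPow (inv_ne_zero hc.ne'), inv_mul_cancel₀ hc.ne', signPow_one]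
  continuous_toFun := continuous_signPow hc
  continuous_invFun := continuous_signPow (inv_pos.2 hc)

end signPow

lemma BpBall_eq_preimage_signPow {I : Type*} {p q : ℝ} (hp : 0 < p) (hq : 0 < q) :
    BpBall I p = (fun x i => signPow (p / q) (x i)) ⁻¹' BpBall I q := by
  have key : ∀ t, |signPow (p / q) t| ^ q = |t| ^ p := fun t => by
    rw [abs_signPow (div_pos hp hq).ne', ← Real.rpow_mul (abs_nonneg t),
      div_mul_cancel₀ p hq.ne']
  ext x
  simp only [BpBall, mem_preimage, mem_ofPred_eq, key]

noncomputable def BpBall.homeomorph (I : Type*) {p q : ℝ} (hp : 0 < p) (hq : 0 < q) :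
    BpBall I p ≃ₜ BpBall I q :=
  (Homeomorph.piCongrRight fun _ : I => signPowHomeomorph (div_pos hp hq)).sets
    (BpBall_eq_preimage_signPow hp hq)

/-- For `1 ≤ p < ∞`, the map `h_p : B_1(I) → B_p(I)`,
`x ↦ (sgn(x_i)·|x_i|^{1/p})_i`, is a homeomorphism (subspace topologies induced
by the product topology on `ℝ^I`). -/
theorem hp_homeomorph (I : Type*) (p : ℝ) (hp : 1 ≤ p) :
    ∃ h : (BpBall I 1) ≃ₜ (BpBall I p),
      ∀ x : BpBall I 1, ∀ i : I,
        (h x : I → ℝ) i = Real.sign ((x : I → ℝ) i) * |(x : I → ℝ) i| ^ (1 / p) :=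
  ⟨BpBall.homeomorph I one_pos (zero_lt_one.trans_le hp), fun _ _ => rfl⟩
end

section
/- Let (I_n)_{n∈ℕ} be a family of sets and let I := Σ_{n∈ℕ} I_n be their disjoint union. For each n ∈ ℕ let F_n be a closed subset of [0,1]^{I_n} with F_n ⊆ c₀(I_n). Then the product space ∏_{n∈ℕ} F_n (with the product topology) is homeomorphic to a closed subset F of [0,1]^I satisfying F ⊆ c₀(I); one such F is the image of ∏_{n∈ℕ} F_n under the map that multiplies all coordinates in the n-th block I_n by 1/(n+1). -/
/-!
Scaling the `n`-th block by `1/(n+1)` is a continuous injection of `∏ₙ Fₙ` into `ℝ^{Σₙ Iₙ}`.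
Each `Fₙ` is a closed subset of a cube, hence compact, so the product is compact and the
injection is a closed embedding, which gives closedness of the image and the homeomorphism.
The image lies in `c₀`: a coordinate of block `n` is at most `1/(n+1)` in size, so only the
finitely many blocks with `n + 1 ≤ 1/ε` can carry coordinates of size `≥ ε`, and each of them
carries finitely many because `Fₙ ⊆ c₀(Iₙ)`.
-/

open Set Topology

/-- `c₀(I) = {x ∈ ℝ^I : ∀ ε > 0, {i : |x_i| ≥ ε} is finite}`. -/
def czero (I : Type*) : Set (I → ℝ) := {x | ∀ ε > 0, {i | ε ≤ |x i|}.Finite}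

theorem IsClosed.isCompact_of_forall_mem_Icc {ι : Type*} {F : Set (ι → ℝ)} {a b : ℝ}
    (hF : IsClosed F) (hab : ∀ x ∈ F, ∀ i, x i ∈ Icc a b) : IsCompact F :=
  (isCompact_univ_pi fun _ => isCompact_Icc).of_isClosed_subset hF
    fun x hx => mem_univ_pi.2 (hab x hx)

noncomputable def blockScale (I : ℕ → Type*) (f : ∀ n, I n → ℝ) : (Σ n, I n) → ℝ :=
  fun p => f p.1 p.2 / ((p.1 : ℝ) + 1)

section

variable {I : ℕ → Type*}

theorem continuous_blockScale : Continuous (blockScale I) :=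
  continuous_pi fun p => ((continuous_apply p.2).comp (continuous_apply p.1)).div_const _

theorem blockScale_injective : Function.Injective (blockScale I) := by
  intro f g h
  funext n i
  have hn : ((n : ℝ) + 1) ≠ 0 := by positivity
  exact (div_left_inj' hn).1 (congrFun h ⟨n, i⟩)

theorem blockScale_mem_Icc {f : ∀ n, I n → ℝ} (hf : ∀ n i, f n i ∈ Icc (0 : ℝ) 1)
    (p : Σ n, I n) : blockScale I f p ∈ Icc (0 : ℝ) 1 := by
  obtain ⟨h0, h1⟩ := hf p.1 p.2
  have hp : (1 : ℝ) ≤ (p.1 : ℝ) + 1 := by simp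
  exact ⟨div_nonneg h0 (by positivity), (div_le_one (by positivity)).2 (h1.trans hp)⟩

theorem blockScale_mem_czero {f : ∀ n, I n → ℝ} {C : ℝ} (hC : ∀ n i, |f n i| ≤ C)
    (hf : ∀ n, f n ∈ czero (I n)) : blockScale I f ∈ czero (Σ n, I n) := by
  intro ε hε
  have hsub : {p : Σ n, I n | ε ≤ |blockScale I f p|} ⊆
      ⋃ n ∈ Iio ⌈C / ε⌉₊, Sigma.mk n '' {i | ε ≤ |f n i|} := by
    rintro ⟨n, i⟩ hp
    have hpos : (0 : ℝ) < (n : ℝ) + 1 := by positivity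
    replace hp : ε ≤ |f n i| / ((n : ℝ) + 1) := by
      simpa only [mem_ofPred_eq, blockScale, abs_div, abs_of_pos hpos] using hp
    have hlarge : ε ≤ |f n i| :=
      hp.trans (div_le_self (abs_nonneg _) (by simp))
    have hn : (n : ℝ) + 1 ≤ C / ε := by
      rw [le_div_iff₀ hε, mul_comm]
      exact ((le_div_iff₀ hpos).1 hp).trans (hC n i)
    have hnN : n < ⌈C / ε⌉₊ :=
      mod_cast (lt_add_one (n : ℝ)).trans_le (hn.trans (Nat.le_ceil _))
    exact mem_biUnion hnN ⟨i, hlarge, rfl⟩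
  exact ((finite_Iio _).biUnion fun n _ => (hf n ε hε).image _).subset hsub

end

/-- If each `F_n` is a closed subset of `[0,1]^{I_n}` contained in `c₀(I_n)`, then
`∏_n F_n` is homeomorphic to a closed subset `F` of `[0,1]^I` (`I = Σ_n I_n`) with
`F ⊆ c₀(I)`; one such `F` is the image of `∏_n F_n` under the map multiplying the
coordinates of the `n`-th block by `1/(n+1)`. -/
theorem prod_eberlein (I : ℕ → Type*) (F : ∀ n, Set (I n → ℝ))
    (hcl : ∀ n, IsClosed (F n))
    (hcube : ∀ n, ∀ x ∈ F n, ∀ i, x i ∈ Set.Icc (0 : ℝ) 1)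
    (hc0 : ∀ n, F n ⊆ czero (I n)) :
    let Φ : (∀ n, I n → ℝ) → ((Σ n, I n) → ℝ) := fun f p => f p.1 p.2 / ((p.1 : ℝ) + 1)
    let Fbig : Set ((Σ n, I n) → ℝ) := Φ '' {f | ∀ n, f n ∈ F n}
    IsClosed Fbig ∧ (∀ x ∈ Fbig, ∀ p, x p ∈ Set.Icc (0 : ℝ) 1) ∧
      Fbig ⊆ czero (Σ n, I n) ∧
      ∃ h : (∀ n, ↥(F n)) ≃ₜ ↥Fbig,
        ∀ x : ∀ n, ↥(F n), (h x : (Σ n, I n) → ℝ) = Φ (fun n => (x n : I n → ℝ)) := by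
  intro Φ Fbig
  have (n : ℕ) : CompactSpace (F n) :=
    isCompact_iff_compactSpace.1 ((hcl n).isCompact_of_forall_mem_Icc (hcube n))
  let g : (∀ n, F n) → (Σ n, I n) → ℝ := blockScale I ∘ Pi.map fun n => Subtype.val
  have hg : IsClosedEmbedding g :=
    (continuous_blockScale.comp (by fun_prop)).isClosedEmbedding
      (blockScale_injective.comp (.piMap fun _ => Subtype.val_injective))
  have hrange : range g = Fbig := by
    rw [range_comp, range_piMap]
    congr 1
    ext f
    simp
  refine ⟨hrange ▸ hg.isClosed_range, ?_, ?_,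
    hg.isEmbedding.toHomeomorph.trans (.setCongr hrange), fun _ => rfl⟩
  · rintro _ ⟨f, hf, rfl⟩
    exact blockScale_mem_Icc fun n => hcube n _ (hf n)
  · rintro _ ⟨f, hf, rfl⟩
    refine blockScale_mem_czero (C := 1) (fun n i => ?_) fun n => hc0 n (hf n)
    obtain ⟨h0, h1⟩ := hcube n _ (hf n) i
    rwa [abs_of_nonneg h0]
end

section
/- Let (I_n)_{n∈ℕ} be a family of sets and let I := Σ_{n∈ℕ} I_n be their disjoint union. For each n ∈ ℕ let F_n be a closed subset of [0,1]^{I_n} with F_n ⊆ B₁⁺(I_n). Then the product space ∏_{n∈ℕ} F_n (with the product topology) is homeomorphic to a closed subset F of [0,1]^I satisfying F ⊆ B₁⁺(I); one such F is the image of ∏_{n∈ℕ} F_n under the map that multiplies all coordinates in the n-th block I_n by 1/2^{n+1}. -/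
/-!
Dividing the `n`-th block by `2 ^ (n + 1)` turns a point of `∏ B₁⁺(I_n)` into a nonnegative
family whose `n`-th block sums to at most `2⁻¹ ^ (n + 1)`, so the whole family sums to at most
`∑ 2⁻¹ ^ (n + 1) = 1`. Each `F_n` is closed in the compact cube `[0,1]^{I_n}`, so `∏ F_n` is
compact, and the scaling map is continuous and injective into a Hausdorff space, hence a closed
embedding.
-/

open Set Topology

def B1plus (I : Type*) : Set (I → ℝ) :=
  {x | (∀ i, x i ∈ Set.Icc (0 : ℝ) 1) ∧ Summable x ∧ ∑' i, x i ≤ 1}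

theorem mem_B1plus_iff {I : Type*} {x : I → ℝ} :
    x ∈ B1plus I ↔ (∀ i, 0 ≤ x i) ∧ Summable x ∧ ∑' i, x i ≤ 1 := by
  refine ⟨fun ⟨h01, hs, hle⟩ => ⟨fun i => (h01 i).1, hs, hle⟩,
    fun ⟨h0, hs, hle⟩ => ⟨fun i => ⟨h0 i, ?_⟩, hs, hle⟩⟩
  exact (hs.le_tsum i fun j _ => h0 j).trans hle

theorem B1plus_subset_pi_Icc (I : Type*) : B1plus I ⊆ univ.pi fun _ => Icc 0 1 :=
  fun _ hx => mem_univ_pi.2 hx.1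

theorem IsClosed.isCompact_of_subset_B1plus {I : Type*} {s : Set (I → ℝ)} (hs : IsClosed s)
    (h : s ⊆ B1plus I) : IsCompact s :=
  (isCompact_univ_pi fun _ => isCompact_Icc).of_isClosed_subset hs
    (h.trans (B1plus_subset_pi_Icc I))

theorem hasSum_inv_two_pow_succ : HasSum (fun n : ℕ => ((2 : ℝ) ^ (n + 1))⁻¹) 1 := by
  convert hasSum_geometric_two' 1 using 2 with n
  rw [pow_succ, div_div, one_div, mul_comm]

theorem exists_homeomorph_image_pi_of_isCompact {ι : Type*} {X : ι → Type*}
    [∀ i, TopologicalSpace (X i)] {Y : Type*} [TopologicalSpace Y] [T2Space Y]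
    {F : ∀ i, Set (X i)} (hF : ∀ i, IsCompact (F i)) {Φ : (∀ i, X i) → Y} (hΦ : Continuous Φ)
    (hinj : InjOn Φ {f | ∀ i, f i ∈ F i}) :
    IsClosed (Φ '' {f | ∀ i, f i ∈ F i}) ∧
      ∃ h : (∀ i, F i) ≃ₜ Φ '' {f | ∀ i, f i ∈ F i}, ∀ x, (h x : Y) = Φ fun i => x i := by
  have := fun i => isCompact_iff_compactSpace.mp (hF i)
  set g : (∀ i, F i) → Y := Φ ∘ Pi.map fun _ => Subtype.val
  have hrange : range g = Φ '' {f | ∀ i, f i ∈ F i} := by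
    rw [range_comp, range_piMap]
    simp only [Subtype.range_coe, Set.pi, mem_univ, true_imp_iff]
  have hg : Continuous g :=
    hΦ.comp (continuous_pi fun i => continuous_subtype_val.comp (continuous_apply i))
  have hg_inj : Function.Injective g := fun x y hxy =>
    funext fun i => Subtype.ext (congrFun (hinj (fun i => (x i).2) (fun i => (y i).2) hxy) i)
  have he := hg.isClosedEmbedding hg_inj
  exact ⟨hrange ▸ he.isClosed_range,
    he.isEmbedding.toHomeomorph.trans (Homeomorph.setCongr hrange), fun _ => rfl⟩

section BlockDiv

variable {α : Type*} {I : α → Type*}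

noncomputable def blockDiv (w : α → ℝ) (f : ∀ a, I a → ℝ) : (Σ a, I a) → ℝ :=
  fun p => f p.1 p.2 / w p.1

theorem continuous_blockDiv (w : α → ℝ) : Continuous (blockDiv (I := I) w) :=
  continuous_pi fun p => ((continuous_apply p.2).comp (continuous_apply p.1)).div_const _

theorem blockDiv_injective {w : α → ℝ} (hw : ∀ a, w a ≠ 0) :
    Function.Injective (blockDiv (I := I) w) := fun _ _ h =>
  funext fun a => funext fun i => (div_left_inj' (hw a)).1 (congrFun h ⟨a, i⟩)

theorem blockDiv_mem_B1plus {w : α → ℝ} (hw : ∀ a, 0 < w a) (hws : Summable fun a => (w a)⁻¹)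
    (hw1 : ∑' a, (w a)⁻¹ ≤ 1) {f : ∀ a, I a → ℝ} (hf : ∀ a, f a ∈ B1plus (I a)) :
    blockDiv w f ∈ B1plus (Σ a, I a) := by
  choose h0 hs hle using fun a => mem_B1plus_iff.1 (hf a)
  have hnn : ∀ p, 0 ≤ blockDiv w f p := fun p => div_nonneg (h0 p.1 p.2) (hw p.1).le
  have hblock : ∀ a, ∑' i, f a i / w a ≤ (w a)⁻¹ := fun a => by
    rw [tsum_div_const, div_eq_mul_inv]
    exact mul_le_of_le_one_left (inv_nonneg.2 (hw a).le) (hle a)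
  have hblocks : Summable fun a => ∑' i, f a i / w a :=
    hws.of_nonneg_of_le (fun a => tsum_nonneg fun i => hnn ⟨a, i⟩) hblock
  have hsum : Summable (blockDiv w f) :=
    (summable_sigma_of_nonneg hnn).2 ⟨fun a => (hs a).div_const (w a), hblocks⟩
  refine mem_B1plus_iff.2 ⟨hnn, hsum, ?_⟩
  calc ∑' p, blockDiv w f p = ∑' a, ∑' i, f a i / w a := hsum.tsum_sigma
    _ ≤ ∑' a, (w a)⁻¹ := hblocks.tsum_le_tsum hblock hws
    _ ≤ 1 := hw1

end BlockDiv

theorem prod_uniform_eberlein_general (I : ℕ → Type*) (F : ∀ n, Set (I n → ℝ))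
    (hcl : ∀ n, IsClosed (F n))
    (hB1 : ∀ n, F n ⊆ B1plus (I n)) :
    let Φ : (∀ n, I n → ℝ) → ((Σ n, I n) → ℝ) := fun f p => f p.1 p.2 / 2 ^ (p.1 + 1)
    let Fbig : Set ((Σ n, I n) → ℝ) := Φ '' {f | ∀ n, f n ∈ F n}
    IsClosed Fbig ∧ (∀ x ∈ Fbig, ∀ p, x p ∈ Set.Icc (0 : ℝ) 1) ∧
      Fbig ⊆ B1plus (Σ n, I n) ∧
      ∃ h : (∀ n, ↥(F n)) ≃ₜ ↥Fbig,
        ∀ x : ∀ n, ↥(F n), (h x : (Σ n, I n) → ℝ) = Φ (fun n => (x n : I n → ℝ)) := by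
  intro Φ Fbig
  have hΦ : Φ = blockDiv fun n => (2 : ℝ) ^ (n + 1) := rfl
  have hw : ∀ n : ℕ, (0 : ℝ) < 2 ^ (n + 1) := fun n => by positivity
  have hsub : Fbig ⊆ B1plus (Σ n, I n) := by
    rintro _ ⟨f, hf, rfl⟩
    exact blockDiv_mem_B1plus hw hasSum_inv_two_pow_succ.summable
      hasSum_inv_two_pow_succ.tsum_eq.le fun n => hB1 n (hf n)
  obtain ⟨hclosed, h, hh⟩ := exists_homeomorph_image_pi_of_isCompact
    (fun n => (hcl n).isCompact_of_subset_B1plus (hB1 n)) (hΦ ▸ continuous_blockDiv _)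
    (hΦ ▸ (blockDiv_injective fun n => (hw n).ne').injOn)
  exact ⟨hclosed, fun x hx => (hsub hx).1, hsub, h, hh⟩

/-- If each `F_n` is a closed subset of `[0,1]^{I_n}` contained in `B₁⁺(I_n)`, then
`∏_n F_n` is homeomorphic to a closed subset `F` of `[0,1]^I` (`I = Σ_n I_n`) with
`F ⊆ B₁⁺(I)`; one such `F` is the image of `∏_n F_n` under the map multiplying the
coordinates of the `n`-th block by `1/2^{n+1}`. -/
theorem prod_uniform_eberlein (I : ℕ → Type*) (F : ∀ n, Set (I n → ℝ))
    (hcl : ∀ n, IsClosed (F n))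
    (hcube : ∀ n, ∀ x ∈ F n, ∀ i, x i ∈ Set.Icc (0 : ℝ) 1)
    (hB1 : ∀ n, F n ⊆ B1plus (I n)) :
    let Φ : (∀ n, I n → ℝ) → ((Σ n, I n) → ℝ) := fun f p => f p.1 p.2 / 2 ^ (p.1 + 1)
    let Fbig : Set ((Σ n, I n) → ℝ) := Φ '' {f | ∀ n, f n ∈ F n}
    IsClosed Fbig ∧ (∀ x ∈ Fbig, ∀ p, x p ∈ Set.Icc (0 : ℝ) 1) ∧
      Fbig ⊆ B1plus (Σ n, I n) ∧
      ∃ h : (∀ n, ↥(F n)) ≃ₜ ↥Fbig,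
        ∀ x : ∀ n, ↥(F n), (h x : (Σ n, I n) → ℝ) = Φ (fun n => (x n : I n → ℝ)) :=
  prod_uniform_eberlein_general I F hcl hB1
end

section
/- Let X be a set and let n ≥ 1 be an integer. The space σ_n(X), with the subspace topology induced by the product topology on {0,1}^X, is sequentially compact: every sequence in σ_n(X) has a subsequence converging (in {0,1}^X) to a point of σ_n(X). -/
/-!
The supports of all terms of the sequence lie in one countable set `Y`. On `Y` the sequence lives
in the compact, first countable space `Y → Bool`, so a subsequence converges there; off `Y` it is
constantly `false`. The limit stays in `σ_n(X)` because `σ_n(X)` is closed: having more than `n`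
coordinates equal to `true` is witnessed on `n + 1` coordinates, an open condition.
-/

open Set Filter Topology

/-- `σ_n(X) = {x ∈ {0,1}^X : |supp(x)| ≤ n}` (identifying `{0,1}` with `Bool`,
`supp(x) = {i : x i = true}`), as a subset of `X → Bool` with the product topology. -/
def sigmaSet (X : Type*) (n : ℕ) : Set (X → Bool) := {x | {i | x i = true}.encard ≤ n}

theorem isClosed_setOf_encard_preimage_le {ι β : Type*} [TopologicalSpace β] {U : Set β}
    (hU : IsOpen U) (n : ℕ∞) : IsClosed {x : ι → β | {i | x i ∈ U}.encard ≤ n} := by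
  refine isOpen_compl_iff.mp (isOpen_iff_mem_nhds.mpr fun x hx => ?_)
  have hlt : n < {i | x i ∈ U}.encard := not_le.mp hx
  have hn : n ≠ ⊤ := hlt.ne_top
  obtain ⟨s, hsx, hs⟩ := exists_subset_encard_eq ((ENat.add_one_le_iff hn).mpr hlt)
  have hsfin : s.Finite := encard_ne_top_iff.mp (by simpa [hs] using hn)
  have hnear : ∀ᶠ y in 𝓝 x, ∀ i ∈ s, y i ∈ U := hsfin.eventually_all.mpr fun i hi =>
    (continuous_apply i).continuousAt.preimage_mem_nhds (hU.mem_nhds (hsx hi))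
  filter_upwards [hnear] with y hy
  have hsy : n + 1 ≤ {i | y i ∈ U}.encard := hs ▸ encard_le_encard hy
  exact not_le.mpr ((ENat.add_one_le_iff hn).mp hsy)

theorem exists_tendsto_subseq_of_eq_off_countable {ι β : Type*} [TopologicalSpace β]
    [CompactSpace β] [FirstCountableTopology β] {Y : Set ι} (hY : Y.Countable) (b : β)
    (u : ℕ → ι → β) (hu : ∀ k, ∀ i ∉ Y, u k i = b) :
    ∃ l : ι → β, ∃ φ : ℕ → ℕ, StrictMono φ ∧ Tendsto (u ∘ φ) atTop (𝓝 l) := by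
  classical
  have : Countable Y := hY.to_subtype
  obtain ⟨w, -, φ, hφ, hw⟩ := isCompact_univ.tendsto_subseq
    (x := fun k (i : Y) => u k i) fun _ => mem_univ _
  refine ⟨fun i => if h : i ∈ Y then w ⟨i, h⟩ else b, φ, hφ, tendsto_pi_nhds.mpr fun i => ?_⟩
  by_cases h : i ∈ Y
  · simpa [h] using tendsto_pi_nhds.mp hw ⟨i, h⟩
  · simpa [h, Function.comp_def, hu _ i h] using tendsto_const_nhds

theorem isClosed_sigmaSet (X : Type*) (n : ℕ) : IsClosed (sigmaSet X n) :=
  isClosed_setOf_encard_preimage_le (isOpen_discrete {true}) n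

theorem sigmaSet_seqCompact_general (X : Type*) (n : ℕ)
    (u : ℕ → (X → Bool)) (hu : ∀ k, u k ∈ sigmaSet X n) :
    ∃ l ∈ sigmaSet X n, ∃ φ : ℕ → ℕ, StrictMono φ ∧
      Tendsto (u ∘ φ) atTop (𝓝 l) := by
  have hY : (⋃ k, {i | u k i = true}).Countable :=
    countable_iUnion fun k => (finite_of_encard_le_coe (hu k)).countable
  obtain ⟨l, φ, hφ, hlim⟩ := exists_tendsto_subseq_of_eq_off_countable hY false u
    fun k i hi => Bool.eq_false_iff.mpr fun h => hi (mem_iUnion.mpr ⟨k, h⟩)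
  exact ⟨l, (isClosed_sigmaSet X n).mem_of_tendsto hlim (.of_forall fun k => hu (φ k)),
    φ, hφ, hlim⟩

/-- For `n ≥ 1`, `σ_n(X)` is sequentially compact: every sequence in `σ_n(X)` has a
subsequence converging (in `{0,1}^X`) to a point of `σ_n(X)`. -/
theorem sigmaSet_seqCompact (X : Type*) (n : ℕ) (hn : 1 ≤ n)
    (u : ℕ → (X → Bool)) (hu : ∀ k, u k ∈ sigmaSet X n) :
    ∃ l ∈ sigmaSet X n, ∃ φ : ℕ → ℕ, StrictMono φ ∧
      Tendsto (u ∘ φ) atTop (𝓝 l) :=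
  sigmaSet_seqCompact_general X n u hu
end

section
/- Let X be a set. The product space ∏_{k∈ℕ} σ_{k+1}(X), with the product topology, is sequentially compact. -/
open Set Filter Topology

theorem finite_of_mem_sigmaSet {X : Type*} {n : ℕ} {x : X → Bool} (hx : x ∈ sigmaSet X n) :
    {i | x i = true}.Finite :=
  finite_of_encard_le_coe hx

theorem exists_tendsto_subseq_of_countable_support {ι : Type*} (x : ℕ → ι → Bool)
    (hx : (⋃ j, {i | x j i = true}).Countable) :
    ∃ (l : ι → Bool) (φ : ℕ → ℕ), StrictMono φ ∧ Tendsto (x ∘ φ) atTop (𝓝 l) := by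
  classical
  set C := ⋃ j, {i | x j i = true}
  have := hx.to_subtype
  obtain ⟨m, φ, hφ, hm⟩ := CompactSpace.tendsto_subseq fun j (i : C) => x j i
  refine ⟨fun i => if h : i ∈ C then m ⟨i, h⟩ else false, φ, hφ, tendsto_pi_nhds.2 fun i => ?_⟩
  by_cases hi : i ∈ C
  · simpa [hi] using tendsto_pi_nhds.1 hm ⟨i, hi⟩
  · have : ∀ j, x j i = false := by simpa [C] using hi
    simp [hi, this]

/-- The product space `∏_{k∈ℕ} σ_{k+1}(X)`, with the product topology, is
sequentially compact. -/
theorem prod_sigmaSet_seqCompact (X : Type*)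
    (u : ℕ → (∀ k : ℕ, ↥(sigmaSet X (k + 1)))) :
    ∃ (l : ∀ k : ℕ, ↥(sigmaSet X (k + 1))) (φ : ℕ → ℕ), StrictMono φ ∧
      Tendsto (u ∘ φ) atTop (𝓝 l) := by
  set y : ℕ → ℕ × X → Bool := fun j p => (u j p.1 : X → Bool) p.2
  have hy : (⋃ j, {p | y j p = true}).Countable := by
    refine countable_iUnion fun j => ?_
    have : {p | y j p = true} = ⋃ k, {k} ×ˢ {i | (u j k : X → Bool) i = true} := by
      ext ⟨k, i⟩; simp [y]
    rw [this]
    exact countable_iUnion fun k =>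
      (countable_singleton k).prod (finite_of_mem_sigmaSet (u j k).2).countable
  obtain ⟨l, φ, hφ, hl⟩ := exists_tendsto_subseq_of_countable_support y hy
  have hlim (k : ℕ) : Tendsto (fun j => (u (φ j) k : X → Bool)) atTop (𝓝 fun i => l (k, i)) :=
    tendsto_pi_nhds.2 fun i => tendsto_pi_nhds.1 hl (k, i)
  have hmem (k : ℕ) : (fun i => l (k, i)) ∈ sigmaSet X (k + 1) :=
    (isClosed_sigmaSet X (k + 1)).mem_of_tendsto (hlim k) (.of_forall fun j => (u (φ j) k).2)
  exact ⟨fun k => ⟨_, hmem k⟩, φ, hφ, tendsto_pi_nhds.2 fun k => tendsto_subtype_rng.2 (hlim k)⟩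
end

section
/- Let I be a set and let F be a closed subset of [0,1]^I with F ⊆ ℓ⁰(I). Then there exist a sequence (Z_n)_{n∈ℕ} of closed subsets of {0,1}^I each consisting of elements with finite support, a closed subset Z of ∏_{n∈ℕ} Z_n, and a continuous surjection g : Z → F; explicitly, Z_n is the image of the preimage of F under the map (x^m)_{m∈ℕ} ↦ (∑_{m∈ℕ} x^m_i / 2^{m+1})_{i∈I} from ({0,1}^I)^ℕ to [0,1]^I under the n-th coordinate projection closure, Z is that preimage, and g is the restriction of this map. -/
/-!
In each coordinate `G` is the binary-expansion map `{0,1}^ℕ → [0,1]`, which is continuous and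
onto; hence `G` maps `Z = G⁻¹(F)` onto `F`. Since `{0,1}^(ℕ × I)` is compact, so is the closed
set `Z`, and its coordinate projections are already closed. A digit `1` in place `n` of
coordinate `i` forces `G(x)ᵢ ≥ 2^{-(n+1)}`, so `G(x) ∈ ℓ⁰(I)` makes the support of `xₙ` finite.
-/

open Set

noncomputable def binaryValue (b : ℕ → Bool) : ℝ :=
  Real.ofDigits (finTwoEquiv.symm ∘ b)

lemma ofDigitsTerm_finTwoEquiv_symm_comp (b : ℕ → Bool) (m : ℕ) :
    Real.ofDigitsTerm (finTwoEquiv.symm ∘ b) m = (if b m then (1 : ℝ) else 0) / 2 ^ (m + 1) := by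
  cases h : b m <;> simp [Real.ofDigitsTerm, finTwoEquiv, h, div_eq_mul_inv]

lemma binaryValue_eq_tsum (b : ℕ → Bool) :
    binaryValue b = ∑' m, (if b m then (1 : ℝ) else 0) / 2 ^ (m + 1) := by
  simp only [binaryValue, Real.ofDigits, ofDigitsTerm_finTwoEquiv_symm_comp]

lemma continuous_binaryValue : Continuous binaryValue :=
  Real.continuous_ofDigits.comp <|
    continuous_pi fun m => continuous_of_discreteTopology.comp (continuous_apply m)

lemma Icc_subset_range_binaryValue : Icc 0 1 ⊆ range binaryValue := by
  intro t ht
  obtain ⟨d, -, hd⟩ := Real.ofDigits_SurjOn one_lt_two ht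
  exact ⟨finTwoEquiv ∘ d, by simp [binaryValue, ← Function.comp_assoc, hd]⟩

lemma inv_two_pow_le_binaryValue {b : ℕ → Bool} {n : ℕ} (hn : b n = true) :
    ((2 : ℝ) ^ (n + 1))⁻¹ ≤ binaryValue b := by
  have := (Real.summable_ofDigitsTerm (digits := finTwoEquiv.symm ∘ b)).le_tsum n
    fun _ _ => Real.ofDigitsTerm_nonneg
  simpa [binaryValue_eq_tsum, ofDigitsTerm_finTwoEquiv_symm_comp, hn] using this

lemma finite_setOf_eq_true_of_binaryValue {I : Type*} {x : ℕ → I → Bool}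
    (hx : ∀ ε > 0, {i | ε ≤ |binaryValue fun m => x m i|}.Finite) (n : ℕ) :
    {i | x n i = true}.Finite :=
  (hx _ (by positivity)).subset fun i hi =>
    (inv_two_pow_le_binaryValue (b := fun m => x m i) hi).trans (le_abs_self _)

/-- Dyadic representation of a closed `F ⊆ [0,1]^I` with `F ⊆ ℓ⁰(I)` (every element
tends to `0` along the cofinite filter): with `G((xᵐ)ₘ)ᵢ = ∑ₘ xᵐᵢ/2^{m+1}`,
`Z = G⁻¹(F)` and `Zₙ` the closure of the `n`-th coordinate projection of `Z`, the
`Zₙ` are closed subsets of `{0,1}^I` all of whose elements have finite support, `Z` is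
a closed subset of `∏_n Zₙ`, and `G` restricts to a continuous surjection `Z → F`. -/
theorem dyadic_representation_ell0 (I : Type*) (F : Set (I → ℝ))
    (hFcl : IsClosed F) (hFcube : ∀ x ∈ F, ∀ i, x i ∈ Set.Icc (0 : ℝ) 1)
    (hF0 : ∀ x ∈ F, ∀ ε > 0, {i | ε ≤ |x i|}.Finite) :
    let G : (ℕ → I → Bool) → (I → ℝ) :=
      fun x i => ∑' m : ℕ, (if x m i then (1 : ℝ) else 0) / 2 ^ (m + 1)
    let Z : Set (ℕ → I → Bool) := G ⁻¹' F
    let Zn : ℕ → Set (I → Bool) := fun n => closure ((fun x => x n) '' Z)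
    (∀ n, IsClosed (Zn n)) ∧
      (∀ n, ∀ y ∈ Zn n, {i | y i = true}.Finite) ∧
      (∀ x ∈ Z, ∀ n, x n ∈ Zn n) ∧
      IsClosed Z ∧ Continuous G ∧ G '' Z = F := by
  intro G Z Zn
  have hG : G = fun x i => binaryValue fun m => x m i := by
    simp only [G, binaryValue_eq_tsum]
  have hGcont : Continuous G := by
    rw [hG]
    exact continuous_pi fun i => continuous_binaryValue.comp <|
      continuous_pi fun m => (continuous_apply i).comp (continuous_apply m)
  have hZcl : IsClosed Z := hFcl.preimage hGcont
  have hZn : ∀ n, Zn n = (fun x => x n) '' Z := fun n =>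
    (hZcl.isCompact.image (continuous_apply n)).isClosed.closure_eq
  refine ⟨fun n => isClosed_closure, ?_, fun x hx n => subset_closure ⟨x, hx, rfl⟩, hZcl,
    hGcont, image_preimage_eq_of_subset fun f hf => ?_⟩
  · intro n y hy
    rw [hZn] at hy
    obtain ⟨x, hx, rfl⟩ := hy
    exact finite_setOf_eq_true_of_binaryValue (by simpa [Z, hG] using hF0 _ hx) n
  · choose b hb using fun i => Icc_subset_range_binaryValue (hFcube f hf i)
    exact ⟨fun m i => b i m, by rw [hG]; funext i; exact hb i⟩
end

section
/- Let I be a set. The space B_1(I) = {x ∈ ℝ^I : ∑_{i∈I}|x_i| ≤ 1}, with the subspace topology induced by the product topology on ℝ^I, is sequentially compact: every sequence in B_1(I) has a subsequence converging pointwise to an element of B_1(I). -/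
open Set Filter Topology

/-- `B_1(I) = {x ∈ ℝ^I : (|x_i|) summable and ∑ |x_i| ≤ 1}`. -/
def B1Ball (I : Type*) : Set (I → ℝ) :=
  {x | Summable (fun i => |x i|) ∧ ∑' i, |x i| ≤ 1}

/-!
`B_1(I)` is cut out by the closed conditions `∑_{i ∈ F} |x_i| ≤ 1`, `F` finite, inside the
compact cube `[-1, 1]^I`, so it is compact. Sequential compactness does not follow directly,
since `ℝ^I` need not be first countable; but the terms of a sequence in `B_1(I)` are all
supported in one countable set `S`, and `ℝ^S` is metrizable. So one extracts a convergent
subsequence of the restrictions in `B_1(S)` and extends its limit by zero.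
-/

namespace B1Ball

variable {I J : Type*}

theorem mem_iff_forall_finset_sum_le {x : I → ℝ} :
    x ∈ B1Ball I ↔ ∀ F : Finset I, ∑ i ∈ F, |x i| ≤ 1 := by
  refine ⟨fun hx F => ?_, fun h => ?_⟩
  · exact (hx.1.sum_le_tsum F fun i _ => abs_nonneg _).trans hx.2
  · have hsum : Summable fun i => |x i| := summable_of_sum_le (fun i => abs_nonneg _) h
    exact ⟨hsum, hsum.tsum_le_of_sum_le h⟩

theorem isClosed : IsClosed (B1Ball I) := by
  have : B1Ball I = ⋂ F : Finset I, {x | ∑ i ∈ F, |x i| ≤ 1} := by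
    ext x
    simp only [mem_iff_forall_finset_sum_le, mem_iInter, mem_ofPred_eq]
  rw [this]
  exact isClosed_iInter fun F => isClosed_le (by fun_prop) continuous_const

theorem subset_pi_Icc : B1Ball I ⊆ univ.pi fun _ => Icc (-1) 1 := fun x hx i _ =>
  abs_le.mp <| by simpa using mem_iff_forall_finset_sum_le.mp hx {i}

theorem isCompact : IsCompact (B1Ball I) :=
  (isCompact_univ_pi fun _ => isCompact_Icc).of_isClosed_subset isClosed subset_pi_Icc

theorem comp_mem {e : J → I} (he : e.Injective) {x : I → ℝ} (hx : x ∈ B1Ball I) :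
    x ∘ e ∈ B1Ball J := by
  refine mem_iff_forall_finset_sum_le.mpr fun F => ?_
  simpa using mem_iff_forall_finset_sum_le.mp hx (F.map ⟨e, he⟩)

theorem extend_zero_mem {e : J → I} (he : e.Injective) {x : J → ℝ} (hx : x ∈ B1Ball J) :
    e.extend x 0 ∈ B1Ball I := by
  have habs : (fun i => |e.extend x 0 i|) = e.extend (fun j => |x j|) 0 := by
    ext i
    rw [Function.apply_extend abs]
    congr 1
    exact funext fun _ => abs_zero
  rw [B1Ball, mem_ofPred_eq, habs, summable_extend_zero he, tsum_extend_zero he]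
  exact hx

theorem countable_support {x : I → ℝ} (hx : x ∈ B1Ball I) : (Function.support x).Countable :=
  hx.1.of_abs.countable_support

end B1Ball

section ExtendZero

variable {I J M : Type*} [Zero M]

theorem continuous_extend_zero [TopologicalSpace M] {e : J → I} (he : e.Injective) :
    Continuous fun x : J → M => e.extend x 0 := by
  refine continuous_pi fun i => ?_
  by_cases hi : ∃ j, e j = i
  · obtain ⟨j, rfl⟩ := hi
    simp only [he.extend_apply]
    exact continuous_apply j
  · simp only [Function.extend_apply' _ _ _ hi]
    exact continuous_const

theorem extend_subtype_val_comp_of_support_subset {S : Set I} {x : I → M}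
    (hx : Function.support x ⊆ S) : Function.extend ((↑) : S → I) (x ∘ (↑)) 0 = x := by
  ext i
  by_cases hi : i ∈ S
  · exact Subtype.val_injective.extend_apply _ _ ⟨i, hi⟩
  · rw [Function.extend_apply' _ _ _ fun ⟨j, hj⟩ => hi (hj ▸ j.2), Pi.zero_apply,
      Function.notMem_support.mp fun h => hi (hx h)]

end ExtendZero

/-- `B_1(I)`, with the subspace topology induced by the product topology on `ℝ^I`,
is sequentially compact: every sequence in `B_1(I)` has a subsequence converging
pointwise to an element of `B_1(I)`. -/
theorem B1Ball_seqCompact (I : Type*) (u : ℕ → (I → ℝ)) (hu : ∀ k, u k ∈ B1Ball I) :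
    ∃ l ∈ B1Ball I, ∃ φ : ℕ → ℕ, StrictMono φ ∧
      Tendsto (u ∘ φ) atTop (𝓝 l) := by
  set S := ⋃ k, Function.support (u k)
  have : Countable S := (countable_iUnion fun k => B1Ball.countable_support (hu k)).to_subtype
  have hext (k : ℕ) : Function.extend ((↑) : S → I) (u k ∘ (↑)) 0 = u k :=
    extend_subtype_val_comp_of_support_subset (subset_iUnion (fun k => Function.support (u k)) k)
  obtain ⟨l, hl, φ, hφ, hlim⟩ := (B1Ball.isCompact (I := S)).tendsto_subseq
    fun k => B1Ball.comp_mem Subtype.val_injective (hu k)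
  refine ⟨_, B1Ball.extend_zero_mem Subtype.val_injective hl, φ, hφ, ?_⟩
  have hlim' := ((continuous_extend_zero Subtype.val_injective).tendsto l).comp hlim
  exact hlim'.congr fun k => hext (φ k)
end

section
/- Let I be a set and let F be a closed subset of [0,1]^I with F ⊆ c₀(I) (i.e., F is I-Eberlein). Then F is sequentially compact: every sequence in F has a subsequence converging (in [0,1]^I) to an element of F. -/
/-!
Every point of `c₀(I)` has countable support, so a sequence in `F` lives on a countable set
`J ⊆ I` of coordinates and vanishes identically off `J`. The cube `[0,1]^J` is compact and
first countable, hence sequentially compact; a subsequence converging on `J` converges in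
`[0,1]^I`, and its limit lies in `F` because `F` is closed.
-/

open Set Filter Topology

open Function

lemma countable_support_of_mem_czero {I : Type*} {x : I → ℝ} (hx : x ∈ czero I) :
    (support x).Countable := by
  have hsub : support x ⊆ ⋃ n : ℕ, {i | 1 / (n + 1 : ℝ) ≤ |x i|} := fun i hi => by
    obtain ⟨n, hn⟩ := exists_nat_one_div_lt (abs_pos.mpr hi)
    exact mem_iUnion.mpr ⟨n, hn.le⟩
  exact (countable_iUnion fun n => (hx _ Nat.one_div_pos_of_nat).countable).mono hsub

open Classical in
lemma tendsto_pi_dite_of_forall_notMem_eq {ι X α : Type*} [TopologicalSpace X]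
    {l : Filter α} {J : Set ι} {u : α → ι → X} {c : ι → X} (hc : ∀ a, ∀ i ∉ J, u a i = c i)
    {y : J → X} (hy : Tendsto (fun a => J.domRestrict (u a)) l (𝓝 y)) :
    Tendsto u l (𝓝 fun i => if h : i ∈ J then y ⟨i, h⟩ else c i) := by
  refine tendsto_pi_nhds.2 fun i => ?_
  by_cases hi : i ∈ J
  · simpa only [dif_pos hi, Set.domRestrict] using tendsto_pi_nhds.1 hy ⟨i, hi⟩
  · simpa only [dif_neg hi, hc _ i hi] using tendsto_const_nhds

theorem exists_strictMono_tendsto_of_countable_support {ι X : Type*} [TopologicalSpace X]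
    [FirstCountableTopology X] [Zero X] {K : Set X} (hK : IsCompact K) {u : ℕ → ι → X}
    (huK : ∀ k i, u k i ∈ K) (hsupp : (⋃ k, support (u k)).Countable) :
    ∃ l, ∃ φ : ℕ → ℕ, StrictMono φ ∧ Tendsto (u ∘ φ) atTop (𝓝 l) := by
  set J := ⋃ k, support (u k)
  have : Countable J := hsupp.to_subtype
  obtain ⟨y, -, φ, hφ, hy⟩ := (isCompact_univ_pi fun _ : J => hK).isSeqCompact
    (x := fun k => J.domRestrict (u k)) fun k j _ => huK k j
  refine ⟨_, φ, hφ, tendsto_pi_dite_of_forall_notMem_eq (c := 0) (fun k i hi => ?_) hy⟩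
  exact notMem_support.1 fun h => hi (mem_iUnion.2 ⟨φ k, h⟩)

/-- A closed subset `F` of `[0,1]^I` with `F ⊆ c₀(I)` (an `I`-Eberlein set) is
sequentially compact: every sequence in `F` has a subsequence converging
(in `[0,1]^I`) to an element of `F`. -/
theorem eberlein_seqCompact (I : Type*) (F : Set (I → ℝ)) (hFcl : IsClosed F)
    (hFcube : ∀ x ∈ F, ∀ i, x i ∈ Set.Icc (0 : ℝ) 1)
    (hFc0 : F ⊆ czero I)
    (u : ℕ → (I → ℝ)) (hu : ∀ k, u k ∈ F) :
    ∃ l ∈ F, ∃ φ : ℕ → ℕ, StrictMono φ ∧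
      Tendsto (u ∘ φ) atTop (𝓝 l) := by
  have hsupp : (⋃ k, support (u k)).Countable :=
    countable_iUnion fun k => countable_support_of_mem_czero (hFc0 (hu k))
  obtain ⟨l, φ, hφ, hl⟩ :=
    exists_strictMono_tendsto_of_countable_support isCompact_Icc (fun k => hFcube _ (hu k)) hsupp
  exact ⟨l, hFcl.mem_of_tendsto hl (.of_forall fun k => hu (φ k)), φ, hφ, hl⟩
end
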